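/- arXiv:1304.0084 — 4 statements merged into one kernel-verified Lean document; each statement's English description precedes it below -/
import Mathlib

section
/- There exists a unique maximum (with respect to inclusion) subset A* ⊆ V satisfying both the global and the local conditions; namely, A* equals the union of all subsets of V satisfying both conditions, and this union itself satisfies both conditions and contains every such subset. -/
/-- Directed reachability within a vertex set `Q`. -/
def ReachIn {V : Type*} (E : V → V → Prop) (Q : Set V) : V → V → Prop :=
  Relation.ReflTransGen (fun x y => x ∈ Q ∧ y ∈ Q ∧ E x y)

/-- Global condition: every vertex of `Q` has a path to `s` inside `Q`. -/
def GlobalCond {V : Type*} (E : V → V → Prop) (Q : Set V) (s : V) : Prop :=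
  ∀ q ∈ Q, ReachIn E Q q s

/-- Local condition: every edge leaving a probabilistic vertex of `Q` stays in `Q`. -/
def LocalCond {V : Type*} (E : V → V → Prop) (VP : Set V) (Q : Set V) : Prop :=
  ∀ u ∈ Q, u ∈ VP → ∀ v, E u v → v ∈ Q

lemma ReachIn.mono {V : Type*} {E : V → V → Prop} {Q Q' : Set V} (h : Q ⊆ Q')
    {a b : V} (hr : ReachIn E Q a b) : ReachIn E Q' a b := by
  induction hr with
  | refl => exact Relation.ReflTransGen.refl
  | tail _ hstep ih => exact ih.tail ⟨h hstep.1, h hstep.2.1, hstep.2.2⟩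

/-- There is a unique maximum set satisfying both conditions, namely the union of
all sets satisfying both conditions; this union satisfies both conditions and
contains every such set. -/
theorem stmt2 {V : Type*} [Fintype V] (E : V → V → Prop) (V1 VP : Set V)
    (hpart : ∀ v, (v ∈ V1 ∧ v ∉ VP) ∨ (v ∉ V1 ∧ v ∈ VP)) (s : V) :
    GlobalCond E (⋃₀ {Q | GlobalCond E Q s ∧ LocalCond E VP Q}) s ∧
    LocalCond E VP (⋃₀ {Q | GlobalCond E Q s ∧ LocalCond E VP Q}) ∧
    (∀ Q, GlobalCond E Q s → LocalCond E VP Q →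
      Q ⊆ ⋃₀ {Q | GlobalCond E Q s ∧ LocalCond E VP Q}) ∧
    (∃! A : Set V, GlobalCond E A s ∧ LocalCond E VP A ∧
      ∀ Q, GlobalCond E Q s → LocalCond E VP Q → Q ⊆ A) := by
  set U := ⋃₀ {Q | GlobalCond E Q s ∧ LocalCond E VP Q} with hU
  have hsub : ∀ Q, GlobalCond E Q s → LocalCond E VP Q → Q ⊆ U := by
    intro Q hg hl x hx
    exact ⟨Q, ⟨hg, hl⟩, hx⟩
  have hg : GlobalCond E U s := by
    intro q hq
    obtain ⟨Q, ⟨hQg, hQl⟩, hqQ⟩ := hq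
    exact (hQg q hqQ).mono (hsub Q hQg hQl)
  have hl : LocalCond E VP U := by
    intro u hu huP v hE
    obtain ⟨Q, ⟨hQg, hQl⟩, huQ⟩ := hu
    exact hsub Q hQg hQl (hQl u huQ huP v hE)
  refine ⟨hg, hl, hsub, U, ⟨hg, hl, hsub⟩, ?_⟩
  intro A ⟨hAg, hAl, hAmax⟩
  exact Set.Subset.antisymm (hsub A hAg hAl) (hAmax U hg hl)
end

section
/- Let G be an MDP graph with target s, and let A* be the maximum set satisfying the global and local conditions. Suppose G' is the induced subgraph of G obtained after removing a set R of vertices, where each removed vertex does not belong to A*. If the set A of vertices having a directed path to s in G' satisfies the local condition with respect to the edges of G (for every u ∈ A ∩ VP and every edge uv ∈ E(G), v ∈ A), then A = A*. -/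
lemma reachIn_mono {V : Type*} {E : V → V → Prop} {P Q : Set V} (h : P ⊆ Q) {a b : V}
    (hr : ReachIn E P a b) : ReachIn E Q a b := by
  induction hr with
  | refl => exact Relation.ReflTransGen.refl
  | tail _ hstep ih => exact ih.tail ⟨h hstep.1, h hstep.2.1, hstep.2.2⟩

/-- Correctness of Algorithm 2: remove a set `R` of vertices none of which belongs
to the maximal set `A*`; if the set `A` of vertices with a path to `s` in the
remaining graph `G'` satisfies the local condition with respect to all edges of
`G`, then `A = A*`. -/
theorem stmt10 {V : Type*} [Fintype V] (E : V → V → Prop) (V1 VP : Set V)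
    (hpart : ∀ v, (v ∈ V1 ∧ v ∉ VP) ∨ (v ∉ V1 ∧ v ∈ VP)) (s : V)
    (R : Set V)
    (hR : ∀ r ∈ R, ∀ Q : Set V, GlobalCond E Q s → LocalCond E VP Q → r ∉ Q)
    (hloc : ∀ u ∈ {w | w ∉ R ∧ ReachIn E Rᶜ w s}, u ∈ VP → ∀ v, E u v →
      v ∈ {w | w ∉ R ∧ ReachIn E Rᶜ w s}) :
    {w | w ∉ R ∧ ReachIn E Rᶜ w s} = ⋃₀ {Q | GlobalCond E Q s ∧ LocalCond E VP Q} := by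
  set A : Set V := {w | w ∉ R ∧ ReachIn E Rᶜ w s} with hA
  apply Set.Subset.antisymm
  · -- A satisfies both conditions, so A ⊆ union
    have hglob : GlobalCond E A s := by
      intro q hq
      have : ∀ x, x ∉ R → ReachIn E Rᶜ x s → ReachIn E A x s := by
        intro x hx hr
        induction hr using Relation.ReflTransGen.head_induction_on with
        | refl => exact Relation.ReflTransGen.refl
        | @head a c hstep htail ih =>
          have hc : c ∈ A := ⟨hstep.2.1, htail⟩
          exact Relation.ReflTransGen.head ⟨⟨hstep.1, Relation.ReflTransGen.head hstep htail⟩,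
            hc, hstep.2.2⟩ (ih hstep.2.1)
      exact this q hq.1 hq.2
    exact fun x hx => ⟨A, ⟨hglob, hloc⟩, hx⟩
  · -- each Q ⊆ A
    rintro x ⟨Q, ⟨hg, hl⟩, hxQ⟩
    have hQR : Q ⊆ Rᶜ := fun y hy hyR => hR y hyR Q hg hl hy
    exact ⟨fun hxR => hR x hxR Q hg hl hxQ, reachIn_mono hQR (hg x hxQ)⟩
end

section
/- Let G be an MDP graph, and let G' be an induced subgraph of G obtained by removing a set of vertices, each of which belongs to no end-component of G. Suppose every strongly connected component C of G' satisfies: for every u ∈ C ∩ VP and every edge uv ∈ E(G), v ∈ C. Then the nontrivial strongly connected components of G' are exactly the maximal end-components of G. -/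
/-- A set `U` induces a strongly connected subgraph: every vertex reaches every
other by a (nonempty) directed path inside `U`. -/
def StronglyConnectedIn {V : Type*} (E : V → V → Prop) (U : Set V) : Prop :=
  ∀ u ∈ U, ∀ v ∈ U, Relation.TransGen (fun x y => x ∈ U ∧ y ∈ U ∧ E x y) u v

/-- An end-component of an MDP graph. -/
def IsEndComponent {V : Type*} (E : V → V → Prop) (VP : Set V) (U : Set V) : Prop :=
  U.Nonempty ∧ StronglyConnectedIn E U ∧ (∀ u ∈ U, u ∈ VP → ∀ v, E u v → v ∈ U)

/-- A maximal end-component. -/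
def IsMEC {V : Type*} (E : V → V → Prop) (VP : Set V) (U : Set V) : Prop :=
  IsEndComponent E VP U ∧ ∀ U', IsEndComponent E VP U' → U ⊆ U' → U' = U

/-- The strongly connected component of `v` in the subgraph of `G` induced on the
complement of the removed set `R`. -/
def SccOf {V : Type*} (E : V → V → Prop) (R : Set V) (v : V) : Set V :=
  {u | u ∈ Rᶜ ∧ ReachIn E Rᶜ u v ∧ ReachIn E Rᶜ v u}

/-!
An end-component avoids the removed set `R`, and being strongly connected it lies inside a single
SCC of the remaining graph. Conversely a nontrivial SCC is strongly connected, and the closure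
hypothesis makes it an end-component; it is maximal because any end-component containing it stays
in the same SCC. Every end-component has an internal edge, so the SCCs obtained this way are the
nontrivial ones.
-/

section

variable {V : Type*} {E : V → V → Prop} {VP R U : Set V} {u v w : V}

theorem mem_sccOf_self (hv : v ∈ Rᶜ) : v ∈ SccOf E R v := ⟨hv, .refl, .refl⟩

/- Each intermediate vertex of the path is reachable from `u` and reaches `w`, hence lies in the
same SCC. -/
theorem reflTransGen_sccOf_of_reachIn (hu : u ∈ SccOf E R v) (huw : ReachIn E Rᶜ u w)
    (hw : w ∈ SccOf E R v) :
    Relation.ReflTransGen (fun x y => x ∈ SccOf E R v ∧ y ∈ SccOf E R v ∧ E x y) u w := by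
  induction huw with
  | refl => exact .refl
  | @tail b c hub hbc ih =>
    have hb : b ∈ SccOf E R v :=
      ⟨hbc.1, (Relation.ReflTransGen.single hbc : ReachIn E Rᶜ b c).trans hw.2.1,
        hu.2.2.trans hub⟩
    exact (ih hb).tail ⟨hb, hw, hbc.2.2⟩

/- The edge `a → b` is what makes the connecting paths nonempty: a single vertex without a loop
is not strongly connected in this sense. -/
theorem stronglyConnectedIn_sccOf {a b : V} (ha : a ∈ SccOf E R v) (hb : b ∈ SccOf E R v)
    (hab : E a b) : StronglyConnectedIn E (SccOf E R v) := fun _ hu _ hw =>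
  Relation.TransGen.trans_right (reflTransGen_sccOf_of_reachIn hu (hu.2.1.trans ha.2.2) ha)
    (Relation.TransGen.head' ⟨ha, hb, hab⟩
      (reflTransGen_sccOf_of_reachIn hb (hb.2.1.trans hw.2.2) hw))

theorem isEndComponent_sccOf (hv : v ∈ Rᶜ)
    (hclosed : ∀ u ∈ SccOf E R v, u ∈ VP → ∀ w, E u w → w ∈ SccOf E R v)
    {a b : V} (ha : a ∈ SccOf E R v) (hb : b ∈ SccOf E R v) (hab : E a b) :
    IsEndComponent E VP (SccOf E R v) :=
  ⟨⟨v, mem_sccOf_self hv⟩, stronglyConnectedIn_sccOf ha hb hab, hclosed⟩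

theorem StronglyConnectedIn.reachIn (hU : StronglyConnectedIn E U) (hUR : U ⊆ Rᶜ)
    (hu : u ∈ U) (hw : w ∈ U) : ReachIn E Rᶜ u w :=
  Relation.ReflTransGen.mono (p := fun x y => x ∈ Rᶜ ∧ y ∈ Rᶜ ∧ E x y)
    (fun _ _ h => ⟨hUR h.1, hUR h.2.1, h.2.2⟩) _ _ (hU u hu w hw).to_reflTransGen

theorem StronglyConnectedIn.subset_sccOf (hU : StronglyConnectedIn E U) (hUR : U ⊆ Rᶜ)
    (hv : v ∈ U) : U ⊆ SccOf E R v := fun _ hu =>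
  ⟨hUR hu, hU.reachIn hUR hu hv, hU.reachIn hUR hv hu⟩

theorem StronglyConnectedIn.exists_edge (hU : StronglyConnectedIn E U) (hv : v ∈ U) :
    ∃ a ∈ U, ∃ b ∈ U, E a b := by
  obtain ⟨b, ⟨hv, hb, hvb⟩, -⟩ := Relation.TransGen.head'_iff.mp (hU v hv v hv)
  exact ⟨v, hv, b, hb, hvb⟩

theorem isMEC_sccOf (hRU : ∀ U, IsEndComponent E VP U → U ⊆ Rᶜ) (hv : v ∈ Rᶜ)
    (hC : IsEndComponent E VP (SccOf E R v)) : IsMEC E VP (SccOf E R v) :=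
  ⟨hC, fun U hU hsub =>
    (hU.2.1.subset_sccOf (hRU U hU) (hsub (mem_sccOf_self hv))).antisymm hsub⟩

end

theorem stmt11_general {V : Type*} (E : V → V → Prop) (VP : Set V)
    (R : Set V)
    (hR : ∀ r ∈ R, ∀ U : Set V, IsEndComponent E VP U → r ∉ U)
    (hclosed : ∀ v ∈ Rᶜ, ∀ u ∈ SccOf E R v, u ∈ VP → ∀ w, E u w → w ∈ SccOf E R v) :
    {C | ∃ v ∈ Rᶜ, C = SccOf E R v ∧ ∃ a ∈ C, ∃ b ∈ C, E a b} =
      {M | IsMEC E VP M} := by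
  have hRU : ∀ U, IsEndComponent E VP U → U ⊆ Rᶜ := fun U hU r hrU hrR => hR r hrR U hU hrU
  ext C
  constructor
  · rintro ⟨v, hv, rfl, a, ha, b, hb, hab⟩
    exact isMEC_sccOf hRU hv (isEndComponent_sccOf hv (hclosed v hv) ha hb hab)
  · rintro ⟨hM, hmax⟩
    obtain ⟨v, hv⟩ := hM.1
    have hvR : v ∈ Rᶜ := hRU C hM hv
    have hsub : C ⊆ SccOf E R v := hM.2.1.subset_sccOf (hRU C hM) hv
    obtain ⟨a, ha, b, hb, hab⟩ := hM.2.1.exists_edge hv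
    have hCeq : SccOf E R v = C :=
      hmax _ (isEndComponent_sccOf hvR (hclosed v hvR) (hsub ha) (hsub hb) hab) hsub
    exact ⟨v, hvR, hCeq.symm, a, ha, b, hb, hab⟩

/-- Correctness of Algorithm 1 (MEC decomposition): if every removed vertex
belongs to no end-component of `G`, and every SCC `C` of the remaining graph `G'`
satisfies that all `G`-edges leaving probabilistic vertices of `C` stay in `C`,
then the nontrivial SCCs of `G'` are exactly the maximal end-components of `G`. -/
theorem stmt11 {V : Type*} [Fintype V] (E : V → V → Prop) (V1 VP : Set V)
    (hpart : ∀ v, (v ∈ V1 ∧ v ∉ VP) ∨ (v ∉ V1 ∧ v ∈ VP))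
    (R : Set V)
    (hR : ∀ r ∈ R, ∀ U : Set V, IsEndComponent E VP U → r ∉ U)
    (hclosed : ∀ v ∈ Rᶜ, ∀ u ∈ SccOf E R v, u ∈ VP → ∀ w, E u w → w ∈ SccOf E R v) :
    {C | ∃ v ∈ Rᶜ, C = SccOf E R v ∧ ∃ a ∈ C, ∃ b ∈ C, E a b} =
      {M | IsMEC E VP M} :=
  stmt11_general E VP R hR hclosed
end

section
/- Let G be a finite directed acyclic graph with source s in which initially every vertex is reachable from s. If deleting edges and then repeatedly deleting vertices v ≠ s with in-degree 0 terminates with a graph G' in which every vertex other than s has positive in-degree, then the vertex set of G' is exactly the set of vertices reachable from s in the graph after the edge deletions. -/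
/-- In a finite DAG with source `s`, a vertex `v` is reachable from `s` if and
only if `v` belongs to the largest set `S` containing `s` in which every vertex
other than `s` has an in-neighbor in `S` (the set of vertices surviving the
repeated deletion of in-degree-zero vertices different from `s`). -/
theorem stmt17 {V : Type*} [Fintype V] (E : V → V → Prop) (s : V)
    (hdag : ∀ v, ¬ Relation.TransGen E v v) :
    ∀ v : V, Relation.ReflTransGen E s v ↔
      v ∈ ⋃₀ {S : Set V | s ∈ S ∧ ∀ u ∈ S, u ≠ s → ∃ w ∈ S, E w u} := by
  have hwf : WellFounded (Relation.TransGen E) := by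
    have : IsIrrefl V (Relation.TransGen E) := ⟨hdag⟩
    exact Finite.wellFounded_of_trans_of_irrefl _
  intro v
  constructor
  · intro hv
    refine ⟨{u | Relation.ReflTransGen E s u}, ⟨Relation.ReflTransGen.refl, ?_⟩, hv⟩
    intro u hu hus
    rcases (Relation.ReflTransGen.cases_tail hu) with h | ⟨w, hw, he⟩
    · exact absurd h.symm (Ne.symm hus)
    · exact ⟨w, hw, he⟩
  · rintro ⟨S, ⟨hsS, hS⟩, hvS⟩
    induction v using hwf.induction with
    | _ v ih =>
      by_cases hvs : v = s
      · exact hvs ▸ Relation.ReflTransGen.refl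
      · obtain ⟨w, hwS, hwe⟩ := hS v hvS hvs
        exact (ih w (Relation.TransGen.single hwe) hwS).tail hwe
end
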